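/- If ξ̄ ∈ Ω satisfies E(ξ̄) ≤ c, then for every i = 1, …, m-1 one has ξᵢ - ξ_{i+1} ≥ aᵢ e^{-c/α}, where α = min_{1 ≤ i ≤ m-1} kᵢ(u_{i+1} - uᵢ) > 0. -/

import Mathlib

noncomputable def F (ξ : ℝ) : ℝ :=
  (1 / Real.sqrt Real.pi) * ∫ s in (0:ℝ)..ξ, Real.exp (-s ^ 2 / 4)

/-- Extension of `ξ = (ξ₁, …, ξₘ)` to indices `0, …, m+1`, with the convention
`ξ_{m+1} = 0` (the value at index `0` is irrelevant: there `F(ξ₀/a₀) = F(+∞) = 1`). -/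
def ext (m : ℕ) (ξ : Fin m → ℝ) : ℕ → ℝ :=
  fun i => if h : 1 ≤ i ∧ i ≤ m then ξ ⟨i - 1, by omega⟩ else 0

/-- The Stefan–Dirichlet potential
`E(ξ̄) = -∑_{i=0}^m kᵢ(u_{i+1}-uᵢ) ln(F(ξᵢ/aᵢ) - F(ξ_{i+1}/aᵢ)) + ∑_{i=1}^m dᵢξᵢ²/4`,
with conventions `F(ξ₀/a₀) = 1`, `ξ_{m+1} = 0` (so `F(ξ_{m+1}/aₘ) = 0`). -/
noncomputable def E (m : ℕ) (u k a d : ℕ → ℝ) (ξ : Fin m → ℝ) : ℝ :=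
  (∑ i ∈ Finset.range (m + 1),
    -(k i * (u (i + 1) - u i) *
      Real.log ((if i = 0 then 1 else F (ext m ξ i / a i)) - F (ext m ξ (i + 1) / a i))))
  + ∑ i ∈ Finset.Icc 1 m, d i * (ext m ξ i) ^ 2 / 4

/-- The domain `Ω = {ξ₁ > ξ₂ > ⋯ > ξₘ > 0}`. -/
def Omega (m : ℕ) : Set (Fin m → ℝ) := {ξ | StrictAnti ξ ∧ ∀ i, 0 < ξ i}

/-! The `i`-th logarithmic term of `E` is nonnegative for every `i`, as is the quadratic part,
so `E(ξ̄) ≤ c` bounds each term `-kᵢ(u_{i+1}-uᵢ) ln(F(ξᵢ/aᵢ) - F(ξ_{i+1}/aᵢ))` by `c`, and hence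
`F(ξᵢ/aᵢ) - F(ξ_{i+1}/aᵢ) ≥ e^{-c/α}` since the logarithm is nonpositive and `α ≤ kᵢ(u_{i+1}-uᵢ)`.
As `F` is 1-Lipschitz, the left side is at most `(ξᵢ - ξ_{i+1})/aᵢ`. -/

open Real intervalIntegral MeasureTheory

section ErrorFunction

lemma F_sub_F (x y : ℝ) :
    F x - F y = ∫ s in y..x, 1 / √π * exp (-s ^ 2 / 4) := by
  have hint (z : ℝ) : IntervalIntegrable (fun s : ℝ => exp (-s ^ 2 / 4)) volume 0 z :=
    (by fun_prop : Continuous fun s : ℝ => exp (-s ^ 2 / 4)).intervalIntegrable 0 z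
  rw [intervalIntegral.integral_const_mul, F, F, ← mul_sub,
    integral_interval_sub_left (hint x) (hint y)]

lemma intervalIntegrable_F_density (x y : ℝ) :
    IntervalIntegrable (fun s : ℝ => 1 / √π * exp (-s ^ 2 / 4)) volume y x :=
  (by fun_prop : Continuous fun s : ℝ => 1 / √π * exp (-s ^ 2 / 4)).intervalIntegrable y x

lemma strictMono_F : StrictMono F := fun y x hyx => by
  rw [← sub_pos, F_sub_F]
  exact intervalIntegral_pos_of_pos_on (intervalIntegrable_F_density x y)
    (fun s _ => by positivity) hyx

lemma F_zero : F 0 = 0 := by simp [F]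

lemma F_nonneg {x : ℝ} (hx : 0 ≤ x) : 0 ≤ F x :=
  F_zero ▸ strictMono_F.monotone hx

lemma F_sub_F_le_sub {x y : ℝ} (hyx : y ≤ x) : F x - F y ≤ x - y := by
  have hsqrt : 1 ≤ √π := one_le_sqrt.mpr (by linarith [pi_gt_three])
  rw [F_sub_F]
  calc ∫ s in y..x, 1 / √π * exp (-s ^ 2 / 4) ≤ ∫ _ in y..x, (1 : ℝ) :=
        integral_mono_on hyx (intervalIntegrable_F_density x y) intervalIntegrable_const
          fun s _ => mul_le_one₀ (div_le_one_of_le₀ hsqrt (sqrt_nonneg π)) (exp_pos _).le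
            (exp_le_one_iff.mpr (by nlinarith [sq_nonneg s]))
    _ = x - y := by simp

/-- `F(+∞) = 1`, as `∫₀^∞ e^{-s²/4} ds = √π`. -/
lemma F_le_one (x : ℝ) : F x ≤ 1 := by
  rcases le_total x 0 with hx | hx
  · linarith [F_zero ▸ strictMono_F.monotone hx]
  have hgauss : ∫ s in Set.Ioi (0 : ℝ), exp (-s ^ 2 / 4) = √π := by
    have h := integral_gaussian_Ioi (1 / 4)
    rw [show π / (1 / 4) = 2 ^ 2 * π by ring, sqrt_mul (by positivity), sqrt_sq two_pos.le]
      at h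
    simpa [neg_div, div_eq_inv_mul] using h
  have hint : IntegrableOn (fun s : ℝ => exp (-s ^ 2 / 4)) (Set.Ioi 0) volume := by
    refine (integrable_exp_neg_mul_sq (b := 1 / 4) (by norm_num)).integrableOn.congr_fun
      (fun s _ => ?_) measurableSet_Ioi
    ring_nf
  have hle : ∫ s in (0 : ℝ)..x, exp (-s ^ 2 / 4) ≤ √π := by
    rw [integral_of_le hx, ← hgauss]
    exact setIntegral_mono_set hint (.of_forall fun s => (exp_pos _).le)
      (.of_forall Set.Ioc_subset_Ioi_self)
  calc F x ≤ 1 / √π * √π := mul_le_mul_of_nonneg_left hle (by positivity)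
    _ = 1 := one_div_mul_cancel (sqrt_pos.mpr pi_pos).ne'

lemma F_sub_F_le_one {x y : ℝ} (hy : 0 ≤ y) : F x - F y ≤ 1 := by
  linarith [F_le_one x, F_nonneg hy]

end ErrorFunction

lemma exp_neg_div_le_of_neg_mul_log_le {α κ c D : ℝ} (hα : 0 < α) (hακ : α ≤ κ)
    (hD : 0 < D) (hD1 : D ≤ 1) (h : -(κ * log D) ≤ c) : exp (-c / α) ≤ D := by
  have hlog : log D ≤ 0 := log_nonpos hD.le hD1
  rw [← le_log_iff_exp_le hD, div_le_iff₀ hα]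
  nlinarith

lemma mul_exp_neg_div_le_sub_of_neg_mul_log_F_le {α κ c a x y : ℝ} (hα : 0 < α)
    (hακ : α ≤ κ) (ha : 0 < a) (hy : 0 ≤ y) (hyx : y < x)
    (h : -(κ * log (F (x / a) - F (y / a))) ≤ c) : a * exp (-c / α) ≤ x - y := by
  have hyx' : y / a < x / a := div_lt_div_of_pos_right hyx ha
  have hgap := exp_neg_div_le_of_neg_mul_log_le hα hακ (sub_pos.mpr (strictMono_F hyx'))
    (F_sub_F_le_one (div_nonneg hy ha.le)) h
  have hlip := F_sub_F_le_sub hyx'.le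
  rw [← sub_div, le_div_iff₀ ha] at hlip
  nlinarith

section Potential

variable {m : ℕ} {ξ : Fin m → ℝ}

lemma ext_of_mem {i : ℕ} (h1 : 1 ≤ i) (h2 : i ≤ m) : ext m ξ i = ξ ⟨i - 1, by omega⟩ :=
  dif_pos ⟨h1, h2⟩

lemma ext_of_not_mem {i : ℕ} (h : ¬(1 ≤ i ∧ i ≤ m)) : ext m ξ i = 0 :=
  dif_neg h

lemma ext_nonneg (hξ : ξ ∈ Omega m) (i : ℕ) : 0 ≤ ext m ξ i := by
  by_cases h : 1 ≤ i ∧ i ≤ m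
  · exact (ext_of_mem h.1 h.2).symm ▸ (hξ.2 _).le
  · exact (ext_of_not_mem h).ge

lemma ext_succ_lt (hξ : ξ ∈ Omega m) {i : ℕ} (h1 : 1 ≤ i) (h2 : i ≤ m) :
    ext m ξ (i + 1) < ext m ξ i := by
  rw [ext_of_mem h1 h2]
  by_cases h : i + 1 ≤ m
  · rw [ext_of_mem (by omega) h]
    exact hξ.1 (Fin.mk_lt_mk.mpr (by omega))
  · rw [ext_of_not_mem (by omega)]
    exact hξ.2 _

noncomputable def logTerm (m : ℕ) (u k a : ℕ → ℝ) (ξ : Fin m → ℝ) (i : ℕ) : ℝ :=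
  -(k i * (u (i + 1) - u i) *
    log ((if i = 0 then 1 else F (ext m ξ i / a i)) - F (ext m ξ (i + 1) / a i)))

lemma E_eq_sum_logTerm_add (u k a d : ℕ → ℝ) :
    E m u k a d ξ = ∑ i ∈ Finset.range (m + 1), logTerm m u k a ξ i
      + ∑ i ∈ Finset.Icc 1 m, d i * ext m ξ i ^ 2 / 4 :=
  rfl

lemma logTerm_of_ne_zero (u k a : ℕ → ℝ) {i : ℕ} (hi : i ≠ 0) :
    logTerm m u k a ξ i
      = -(k i * (u (i + 1) - u i) * log (F (ext m ξ i / a i) - F (ext m ξ (i + 1) / a i))) := by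
  simp only [logTerm, if_neg hi]

variable {u k a : ℕ → ℝ}

lemma logTerm_nonneg (hk : ∀ i ≤ m, 0 < k i) (ha : ∀ i ≤ m, 0 < a i) (hu0 : u 0 ≤ u 1)
    (hu : ∀ i, 1 ≤ i → i ≤ m → u i < u (i + 1)) (hξ : ξ ∈ Omega m) {i : ℕ} (him : i ≤ m) :
    0 ≤ logTerm m u k a ξ i := by
  have hy : 0 ≤ ext m ξ (i + 1) / a i := div_nonneg (ext_nonneg hξ _) (ha i him).le
  have hdu : 0 ≤ u (i + 1) - u i := by
    rcases Nat.eq_zero_or_pos i with rfl | hi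
    · exact sub_nonneg.mpr hu0
    · exact sub_nonneg.mpr (hu i hi him).le
  refine neg_nonneg.mpr (mul_nonpos_of_nonneg_of_nonpos
    (mul_nonneg (hk i him).le hdu) (log_nonpos ?_ ?_))
  · split_ifs with hi
    · linarith [F_le_one (ext m ξ (i + 1) / a i)]
    · refine sub_nonneg.mpr (strictMono_F.monotone ?_)
      exact div_le_div_of_nonneg_right (ext_succ_lt hξ (by omega) him).le (ha i him).le
  · split_ifs
    · linarith [F_nonneg hy]
    · exact F_sub_F_le_one hy

lemma logTerm_le_E (hk : ∀ i ≤ m, 0 < k i) (ha : ∀ i ≤ m, 0 < a i) {d : ℕ → ℝ}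
    (hd : ∀ i, 1 ≤ i → i ≤ m → 0 ≤ d i) (hu0 : u 0 ≤ u 1)
    (hu : ∀ i, 1 ≤ i → i ≤ m → u i < u (i + 1)) (hξ : ξ ∈ Omega m) {i : ℕ} (him : i ≤ m) :
    logTerm m u k a ξ i ≤ E m u k a d ξ := by
  have hlog : logTerm m u k a ξ i ≤ ∑ j ∈ Finset.range (m + 1), logTerm m u k a ξ j :=
    Finset.single_le_sum (fun j hj => logTerm_nonneg hk ha hu0 hu hξ
      (Nat.lt_succ_iff.mp (Finset.mem_range.mp hj))) (Finset.mem_range.mpr (by omega))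
  have hquad : 0 ≤ ∑ j ∈ Finset.Icc 1 m, d j * ext m ξ j ^ 2 / 4 :=
    Finset.sum_nonneg fun j hj => by
      have := hd j (Finset.mem_Icc.mp hj).1 (Finset.mem_Icc.mp hj).2
      positivity
  rw [E_eq_sum_logTerm_add]
  linarith

end Potential

theorem E_sublevel_gap (m : ℕ) (u k a d : ℕ → ℝ)
    (hk : ∀ i ≤ m, 0 < k i) (ha : ∀ i ≤ m, 0 < a i)
    (hd : ∀ i, 1 ≤ i → i ≤ m → 0 ≤ d i)
    (hu0 : u 0 ≤ u 1) (hu : ∀ i, 1 ≤ i → i ≤ m → u i < u (i + 1))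
    (hm2 : 2 ≤ m) (c : ℝ)
    (ξ : Fin m → ℝ) (hξ : ξ ∈ Omega m) (hE : E m u k a d ξ ≤ c) :
    ∀ i, 1 ≤ i → i ≤ m - 1 →
      a i * Real.exp (-c / ((Finset.Icc 1 (m - 1)).inf'
          (Finset.nonempty_Icc.mpr (by omega)) (fun j => k j * (u (j + 1) - u j))))
        ≤ ext m ξ i - ext m ξ (i + 1) := by
  intro i hi1 hi2
  have hα : 0 < (Finset.Icc 1 (m - 1)).inf' (Finset.nonempty_Icc.mpr (by omega))
      (fun j => k j * (u (j + 1) - u j)) :=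
    (Finset.lt_inf'_iff _).mpr fun j hj => by
      obtain ⟨hj1, hj2⟩ := Finset.mem_Icc.mp hj
      exact mul_pos (hk j (by omega)) (sub_pos.mpr (hu j hj1 (by omega)))
  have hterm := (logTerm_le_E hk ha hd hu0 hu hξ (by omega : i ≤ m)).trans hE
  rw [logTerm_of_ne_zero u k a (by omega)] at hterm
  exact mul_exp_neg_div_le_sub_of_neg_mul_log_F_le hα
    (Finset.inf'_le _ (Finset.mem_Icc.mpr ⟨hi1, hi2⟩)) (ha i (by omega))
    (ext_nonneg hξ _) (ext_succ_lt hξ hi1 (by omega)) hterm
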